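/- arXiv:2402.06114 — 3 statements merged into one kernel-verified Lean document; each statement's English description precedes it below -/
import Mathlib

section
/- In vacuum (ρ = p = 0) the Friedmann equations of semi-symmetric metric gravity force H(t) = ω(t); in particular, for constant ω = ω₀ the scale factor satisfying ȧ/a = ω₀ with a(0) = a₀ is a(t) = a₀ e^{ω₀ t}, a de Sitter expansion. -/
/-! In vacuum the first Friedmann equation reads `3 (H - ω)² = 0`, so `H = ω`. For constant
`ω = ω₀` the scale factor solves `ȧ = ω₀ a`; then `a(t) e^{-ω₀ t}` has zero derivative, hence
equals `a(0)`. -/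

theorem eq_of_three_mul_sq_eq_sub {R : Type*} [CommRing R] [IsDomain R] (h3 : (3 : R) ≠ 0)
    {x y : R} (h : 3 * x ^ 2 = -3 * y ^ 2 + 6 * x * y) : x = y := by
  have hsq : 3 * (x - y) ^ 2 = 0 := by linear_combination h
  exact sub_eq_zero.mp (pow_eq_zero_iff two_ne_zero |>.mp ((mul_eq_zero.mp hsq).resolve_left h3))

theorem eq_mul_exp_of_hasDerivAt_const_mul {k : ℝ} {a : ℝ → ℝ}
    (ha : ∀ t, HasDerivAt a (k * a t) t) (t : ℝ) : a t = a 0 * Real.exp (k * t) := by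
  set g : ℝ → ℝ := fun v => a v * Real.exp (-(k * v))
  have hg : ∀ v, HasDerivAt g 0 v := fun v => by
    have hexp : HasDerivAt (fun v => Real.exp (-(k * v))) (Real.exp (-(k * v)) * -k) v :=
      (((hasDerivAt_id v).const_mul k).neg.congr_deriv (by ring)).exp
    exact ((ha v).mul hexp).congr_deriv (by ring)
  have hconst : g t = g 0 :=
    is_const_of_deriv_eq_zero (fun v => (hg v).differentiableAt) (fun v => (hg v).deriv) t 0
  have hinv : a t = g t * Real.exp (k * t) := by
    simp only [g, mul_assoc, ← Real.exp_add, neg_add_cancel, Real.exp_zero, mul_one]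
  simpa [hconst, g] using hinv

/-- In vacuum (`ρ = p = 0`) the first generalized Friedmann equation forces
`H(t) = ω(t)`; in particular, for constant `ω = ω₀`, the scale factor with
`ȧ/a = ω₀` and `a(0) = a₀` is the de Sitter expansion `a(t) = a₀ e^{ω₀ t}`. -/
theorem vacuum_de_sitter
    (H ω : ℝ → ℝ)
    (hF1 : ∀ t, 3 * H t ^ 2 = 8 * Real.pi * 0 - 3 * ω t ^ 2 + 6 * H t * ω t) :
    (∀ t, H t = ω t) ∧
    (∀ (ω₀ a₀ : ℝ) (a : ℝ → ℝ),
      (∀ t, HasDerivAt a (ω₀ * a t) t) → a 0 = a₀ →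
      ∀ t, a t = a₀ * Real.exp (ω₀ * t)) := by
  refine ⟨fun t => eq_of_three_mul_sq_eq_sub three_ne_zero ?_, ?_⟩
  · linear_combination hF1 t
  · rintro ω₀ a₀ a ha rfl t
    exact eq_mul_exp_of_hasDerivAt_const_mul ha t
end

section
/- For a flat FLRW metric ds² = −dt² + a²(t)δ_ij dx^i dx^j with π_ν = (−ω(t),0,0,0) and perfect-fluid source, the 00-component of the semi-symmetric field equations R̊_νσ − (1/2)g_νσ R̊ − ∇̊_σ π_ν − ∇̊_ν π_σ + 2π_σπ_ν + 2g_σν ∇̊_λ π^λ + g_νσ π^ρπ_ρ = 8πT_νσ reduces to 3H² = 8πρ + 6Hω − 3ω². -/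
/-- For flat FLRW with `π_ν = (−ω(t),0,0,0)` and a perfect fluid, the
00-component of the semi-symmetric field equations reduces to the first
Friedmann equation `3H² = 8πρ + 6Hω − 3ω²`. -/
theorem friedmann_first_from_00_component
    (a adot addot ω ωdot ρ H : ℝ) (ha : a ≠ 0) (hH : H = adot / a)
    (heq00 : (-3 * addot / a)
      - (1/2) * (-1) * (6 * (addot / a + (adot / a) ^ 2))
      - (-ωdot) - (-ωdot)
      + 2 * (-ω) * (-ω)
      + 2 * (-1) * (ωdot + 3 * (adot / a) * ω)
      + (-1) * (-(ω ^ 2)) = 8 * Real.pi * ρ) :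
    3 * H ^ 2 = 8 * Real.pi * ρ + 6 * H * ω - 3 * ω ^ 2 := by
  subst hH
  have h : -3 * addot / a = -3 * (addot / a) := by ring
  rw [h] at heq00
  nlinarith [heq00]
end

section
/- Under the same FLRW assumptions, the ii-component of the semi-symmetric field equations reduces to 2Ḣ + 3H² = −8πp + 4Hω − ω² + 2ω̇. -/
/-- For flat FLRW, the ii-component of the semi-symmetric field equations
reduces to the second Friedmann equation `2Ḣ + 3H² = −8πp + 4Hω − ω² + 2ω̇`. -/
theorem friedmann_second_from_ii_component
    (a adot addot ω ωdot p H Hdot : ℝ) (ha : a ≠ 0)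
    (hH : H = adot / a) (hHdot : Hdot = addot / a - (adot / a) ^ 2)
    (heqii : (a * addot + 2 * adot ^ 2)
      - (1/2) * a ^ 2 * (6 * (addot / a + (adot / a) ^ 2))
      - a * adot * ω - a * adot * ω
      + 2 * 0 * 0
      + 2 * a ^ 2 * (ωdot + 3 * (adot / a) * ω)
      + a ^ 2 * (-(ω ^ 2)) = 8 * Real.pi * p * a ^ 2) :
    2 * Hdot + 3 * H ^ 2 = -(8 * Real.pi) * p + 4 * H * ω - ω ^ 2 + 2 * ωdot := by
  have ha2 : a ^ 2 ≠ 0 := pow_ne_zero _ ha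
  subst hH hHdot
  field_simp at heqii ⊢
  nlinarith [heqii, sq_nonneg a]
end
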